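/- For k ∈ ℝ define F_k : ℝ² → ℝ² by F_k(x, y) = (3/2 − x/2 − x·y³, (1/2 − k) − (3/2 − k)·y + x·y³). Then F_k(1, 1) = (0, 0) for every k, the total derivative of F_k at (1,1) is the matrix A(k) = [[−3/2, −3], [1, 3/2 + k]], the characteristic polynomial of A(k) is X² − k·X + (3/4 − 3k/2), and whenever k² + 6k − 3 < 0 the complex eigenvalues of A(k) are (k ± i·√(3 − 6k − k²))/2; in particular at k = 0 the eigenvalues are ±i·√3/2. -/

import Mathlib

open Polynomial

/-- The vector field `F_k(x,y) = (3/2 − x/2 − xy³, (1/2 − k) − (3/2 − k)y + xy³)`. -/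
noncomputable def Fk (k : ℝ) : ℝ × ℝ → ℝ × ℝ :=
  fun p => (3/2 - p.1/2 - p.1 * p.2 ^ 3, (1/2 - k) - (3/2 - k) * p.2 + p.1 * p.2 ^ 3)

/-- The matrix `A(k) = [[−3/2, −3], [1, 3/2 + k]]`. -/
noncomputable def Ak (k : ℝ) : Matrix (Fin 2) (Fin 2) ℝ := !![-3/2, -3; 1, 3/2 + k]

/-! The Jacobian `A(k)` of `F_k` at `(1,1)` has trace `k` and determinant `3/4 − 3k/2`, so its
eigenvalues are the roots `(k ± s)/2` of its characteristic polynomial, where `s² = k² + 6k − 3`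
is the discriminant; when that is negative, `s = i√(3 − 6k − k²)`. -/

theorem Matrix.spectrum_fin_two {K : Type*} [Field K] [NeZero (2 : K)]
    (M : Matrix (Fin 2) (Fin 2) K) {s : K} (hs : s * s = M.trace ^ 2 - 4 * M.det) :
    spectrum K M = {(M.trace + s) / 2, (M.trace - s) / 2} := by
  ext μ
  have hdiscrim : discrim 1 (-M.trace) M.det = s * s := by rw [discrim, hs]; ring
  rw [Matrix.mem_spectrum_iff_isRoot_charpoly, Matrix.charpoly_fin_two, Set.mem_insert_iff,
    Set.mem_singleton_iff, IsRoot, eval_add, eval_sub, eval_mul, eval_pow, eval_X, eval_C, eval_C]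
  convert quadratic_eq_zero_iff one_ne_zero hdiscrim μ using 1 <;> ring_nf

theorem Fk_one_one (k : ℝ) : Fk k (1, 1) = (0, 0) := by
  norm_num [Fk]

theorem differentiable_Fk (k : ℝ) : Differentiable ℝ (Fk k) := by
  unfold Fk; fun_prop

theorem fderiv_Fk_apply (k : ℝ) (p v : ℝ × ℝ) :
    fderiv ℝ (Fk k) p v =
      (-(1/2 + p.2 ^ 3) * v.1 - 3 * p.1 * p.2 ^ 2 * v.2,
       p.2 ^ 3 * v.1 + (3 * p.1 * p.2 ^ 2 - (3/2 - k)) * v.2) := by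
  have hcube : HasFDerivAt (fun q : ℝ × ℝ => q.2 ^ 3) _ p :=
    (hasFDerivAt_snd (𝕜 := ℝ) (p := p)).pow 3
  have hF : HasFDerivAt (Fk k) _ p :=
    (((hasFDerivAt_const _ _).sub (hasFDerivAt_fst.mul_const (2⁻¹ : ℝ))).sub
      (hasFDerivAt_fst.mul hcube)).prodMk
    (((hasFDerivAt_const _ _).sub (hasFDerivAt_snd.const_mul _)).add (hasFDerivAt_fst.mul hcube))
  rw [hF.fderiv]
  ext <;>
    simp only [ContinuousLinearMap.prod_apply, add_apply, sub_apply, smul_apply, zero_apply,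
      ContinuousLinearMap.coe_fst', ContinuousLinearMap.coe_snd', smul_eq_mul, nsmul_eq_mul] <;>
    ring

theorem trace_Ak (k : ℝ) : (Ak k).trace = k := by
  norm_num [Ak, Matrix.trace_fin_two]

theorem det_Ak (k : ℝ) : (Ak k).det = 3/4 - 3 * k / 2 := by
  norm_num [Ak, Matrix.det_fin_two]; ring

theorem charpoly_Ak (k : ℝ) : (Ak k).charpoly = X ^ 2 - C k * X + C (3/4 - 3 * k / 2) := by
  rw [Matrix.charpoly_fin_two, trace_Ak, det_Ak]

theorem spectrum_Ak (k : ℝ) (hk : k ^ 2 + 6 * k - 3 < 0) :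
    spectrum ℂ ((Ak k).map Complex.ofReal) =
      {((k : ℂ) + Complex.I * (Real.sqrt (3 - 6 * k - k ^ 2) : ℝ)) / 2,
       ((k : ℂ) - Complex.I * (Real.sqrt (3 - 6 * k - k ^ 2) : ℝ)) / 2} := by
  have htrace : ((Ak k).map Complex.ofReal).trace = k := by
    norm_num [Ak, Matrix.trace_fin_two]
  have hdet : ((Ak k).map Complex.ofReal).det = 3/4 - 3 * k / 2 := by
    norm_num [Ak, Matrix.det_fin_two]; ring
  have hsqrt : ((Real.sqrt (3 - 6 * k - k ^ 2) : ℝ) : ℂ) ^ 2 = 3 - 6 * k - k ^ 2 := by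
    rw [← Complex.ofReal_pow, Real.sq_sqrt (by linarith)]; push_cast; ring
  have hdiscrim : (Complex.I * (Real.sqrt (3 - 6 * k - k ^ 2) : ℝ)) *
      (Complex.I * (Real.sqrt (3 - 6 * k - k ^ 2) : ℝ)) =
      ((Ak k).map Complex.ofReal).trace ^ 2 - 4 * ((Ak k).map Complex.ofReal).det := by
    rw [htrace, hdet]
    linear_combination (((Real.sqrt (3 - 6 * k - k ^ 2) : ℝ) : ℂ) ^ 2) * Complex.I_sq - hsqrt
  rw [Matrix.spectrum_fin_two _ hdiscrim, htrace]

/-- `(1,1)` is an equilibrium of `F_k` for every `k`, the total derivative of `F_k`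
at `(1,1)` is `A(k)`, the characteristic polynomial of `A(k)` is
`X² − kX + (3/4 − 3k/2)`, and for `k² + 6k − 3 < 0` the eigenvalues of `A(k)` are
`(k ± i√(3 − 6k − k²))/2`; in particular at `k = 0` they are `± i√3/2`. -/
theorem stmt_10 :
    (∀ k : ℝ, Fk k (1, 1) = (0, 0)) ∧
    (∀ k : ℝ, DifferentiableAt ℝ (Fk k) (1, 1) ∧
      fderiv ℝ (Fk k) (1, 1) (1, 0) = (-3/2, 1) ∧
      fderiv ℝ (Fk k) (1, 1) (0, 1) = (-3, 3/2 + k)) ∧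
    (∀ k : ℝ, (Ak k).charpoly = X ^ 2 - C k * X + C (3/4 - 3 * k / 2)) ∧
    (∀ k : ℝ, k ^ 2 + 6 * k - 3 < 0 →
      spectrum ℂ ((Ak k).map Complex.ofReal) =
        {((k : ℂ) + Complex.I * (Real.sqrt (3 - 6 * k - k ^ 2) : ℝ)) / 2,
         ((k : ℂ) - Complex.I * (Real.sqrt (3 - 6 * k - k ^ 2) : ℝ)) / 2}) ∧
    spectrum ℂ ((Ak 0).map Complex.ofReal) =
      {Complex.I * ((Real.sqrt 3 / 2 : ℝ) : ℂ),
       -(Complex.I * ((Real.sqrt 3 / 2 : ℝ) : ℂ))} := by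
  refine ⟨Fk_one_one, fun k => ⟨(differentiable_Fk k).differentiableAt, ?_, ?_⟩, charpoly_Ak,
    spectrum_Ak, ?_⟩
  · rw [fderiv_Fk_apply]; norm_num
  · rw [fderiv_Fk_apply]; norm_num; ring
  · rw [spectrum_Ak 0 (by norm_num)]
    congr 1 <;> norm_num <;> ring
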